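/- arXiv:2511.04374 — 2 statements merged into one kernel-verified Lean document; each statement's English description precedes it below -/
import Mathlib

section
/- Let k ≥ 2 and n ≥ 2k+1 be integers, and let F be a simple graph on n vertices all of whose connected components are factor-critical, with component orders d_1 ≥ d_2 ≥ … ≥ d_q satisfying Σ_{i=1}^{q} (d_i − 1)/2 = k − 1. If e(F) ≥ C(2k−3,2) + 2, then d_2 ≤ 3 and d_3 = 1; that is, the second-largest component has at most 3 vertices and every component other than the two largest is a single vertex. -/
/-!
A factor-critical component has odd order `2m + 1` and spans at most `m (2m + 1)` edges; the
weights `m` of the components add up to `k - 1`. If every component had weight at most `k - 3`,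
then `e(F) ≤ Σ m (2k - 5) = (k - 1)(2k - 5) < C(2k - 3, 2) + 2`. Hence some component carries
all but at most one unit of the weight, so besides it there is at most one component with more
than one vertex, and that one has three vertices.
-/

/-- A graph `D` is factor-critical if for every vertex `v`, the graph `D - v` has a perfect
matching, i.e. `D` has a matching covering exactly the complement of `{v}`. -/
def FactorCritical {W : Type*} (D : SimpleGraph W) : Prop :=
  ∀ v : W, ∃ M : D.Subgraph, M.IsMatching ∧ M.verts = {v}ᶜ

open Finset

theorem FactorCritical.odd_card {W : Type*} [Finite W] [Nonempty W] {D : SimpleGraph W}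
    (hD : FactorCritical D) : Odd (Nat.card W) := by
  classical
  have : Fintype W := Fintype.ofFinite W
  obtain ⟨v⟩ := ‹Nonempty W›
  obtain ⟨M, hM, hverts⟩ := hD v
  have heven : Even (Nat.card W - 1) := by
    simpa [hverts, card_compl] using hM.even_card
  have hpos : 0 < Nat.card W := Nat.card_pos
  rw [← Nat.sub_add_cancel hpos]
  exact heven.add_one

theorem SimpleGraph.ncard_edgeSet_le_sum_choose_two {V : Type*} [Fintype V] (G : SimpleGraph V)
    [Fintype G.ConnectedComponent] :
    G.edgeSet.ncard ≤ ∑ K : G.ConnectedComponent, K.supp.ncard.choose 2 := by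
  classical
  calc G.edgeSet.ncard = #G.edgeFinset := Set.ncard_eq_toFinset_card' _
    _ ≤ #(univ.biUnion fun K : G.ConnectedComponent => G.edgeFinset ∩ K.supp.toFinset.sym2) := by
      refine card_le_card fun e he => ?_
      induction e using Sym2.ind with | _ u v => ?_
      have hadj : G.Adj u v := by simpa using he
      simp only [mem_biUnion, mem_univ, true_and, mem_inter, mem_sym2_iff]
      refine ⟨G.connectedComponentMk u, he, ?_⟩
      simpa using hadj.symm.reachable
    _ ≤ ∑ K : G.ConnectedComponent, #(G.edgeFinset ∩ K.supp.toFinset.sym2) := card_biUnion_le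
    _ ≤ ∑ K : G.ConnectedComponent, K.supp.ncard.choose 2 := by
      refine sum_le_sum fun K _ => ?_
      rw [← SimpleGraph.map_edgeFinset_induce, card_map, Set.ncard_eq_toFinset_card',
        Set.toFinset_card]
      exact SimpleGraph.card_edgeFinset_le_card_choose_two

theorem Nat.choose_two_of_odd {d : ℕ} (hd : Odd d) : d.choose 2 = (d - 1) / 2 * d := by
  obtain ⟨m, rfl⟩ := hd
  rw [show (2 * m + 1 - 1) / 2 = m by omega, Nat.choose_two_right, Nat.add_sub_cancel, mul_comm,
    mul_assoc, Nat.mul_div_cancel_left _ two_pos]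

theorem Nat.mul_sub_five_lt_choose_two_add_two (k : ℕ) :
    (k - 1) * (2 * k - 5) < (2 * k - 3).choose 2 + 2 := by
  rcases Nat.lt_or_ge k 3 with hk | hk
  · interval_cases k <;> simp
  obtain ⟨j, rfl⟩ : ∃ j, k = j + 3 := ⟨k - 3, by omega⟩
  rw [show 2 * (j + 3) - 3 = 2 * (j + 1) + 1 by omega,
    Nat.choose_two_of_odd (odd_two_mul_add_one _), show j + 3 - 1 = j + 2 by omega,
    show 2 * (j + 3) - 5 = 2 * j + 1 by omega]
  simp only [Nat.add_sub_cancel, Nat.mul_div_cancel_left _ two_pos]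
  nlinarith

theorem exists_sum_erase_le_one_of_le_sum_choose_two {ι : Type*} [Fintype ι] [DecidableEq ι]
    {d : ι → ℕ} {k : ℕ} (hd : ∀ i, Odd (d i)) (hsum : ∑ i, (d i - 1) / 2 = k - 1)
    (hchoose : (2 * k - 3).choose 2 + 2 ≤ ∑ i, (d i).choose 2) :
    ∃ i₀, ∑ i ∈ univ.erase i₀, (d i - 1) / 2 ≤ 1 := by
  by_contra! hrest
  have hbound (i : ι) : (d i).choose 2 ≤ (d i - 1) / 2 * (2 * k - 5) := by
    have hsplit := add_sum_erase univ (fun i => (d i - 1) / 2) (mem_univ i)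
    have := hrest i
    obtain ⟨t, ht⟩ := hd i
    rw [Nat.choose_two_of_odd (hd i)]
    exact Nat.mul_le_mul_left _ (by omega)
  have : (2 * k - 3).choose 2 + 2 ≤ (k - 1) * (2 * k - 5) := calc
    _ ≤ ∑ i, (d i).choose 2 := hchoose
    _ ≤ ∑ i, (d i - 1) / 2 * (2 * k - 5) := sum_le_sum fun i _ => hbound i
    _ = (k - 1) * (2 * k - 5) := by rw [← sum_mul, hsum]
  exact (Nat.mul_sub_five_lt_choose_two_add_two k).not_ge this

section

variable {ι : Type*} [Fintype ι] [DecidableEq ι] {f : ι → ℕ} {i₀ : ι}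

theorem le_one_of_sum_erase_le_one (h : ∑ i ∈ univ.erase i₀, f i ≤ 1) {i : ι} (hi : i ≠ i₀) :
    f i ≤ 1 :=
  (single_le_sum (fun _ _ => Nat.zero_le _) (mem_erase.2 ⟨hi, mem_univ i⟩)).trans h

theorem subsingleton_setOf_two_le_of_sum_erase_le_one (h : ∑ i ∈ univ.erase i₀, f i ≤ 1) :
    {i | 2 ≤ f i}.Subsingleton := by
  have heq {i : ι} (hi : 2 ≤ f i) : i = i₀ := by
    by_contra hne
    have := le_one_of_sum_erase_le_one h hne
    omega
  exact fun a ha b hb => (heq ha).trans (heq hb).symm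

theorem ncard_setOf_pos_le_two_of_sum_erase_le_one (h : ∑ i ∈ univ.erase i₀, f i ≤ 1) :
    {i | 0 < f i}.ncard ≤ 2 := by
  have hrest : #{i ∈ univ.erase i₀ | 0 < f i} ≤ 1 := calc
    _ ≤ ∑ i ∈ univ.erase i₀ with 0 < f i, f i := by
      simpa using
        card_nsmul_le_sum {i ∈ univ.erase i₀ | 0 < f i} f 1 fun i hi => (mem_filter.1 hi).2
    _ ≤ ∑ i ∈ univ.erase i₀, f i := sum_le_sum_of_subset (filter_subset _ _)
    _ ≤ 1 := h
  calc {i | 0 < f i}.ncard ≤ #(insert i₀ {i ∈ univ.erase i₀ | 0 < f i}) := by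
        rw [← Set.ncard_coe_finset]
        exact Set.ncard_le_ncard fun i hi => by by_cases i = i₀ <;> simp_all
    _ ≤ 2 := (card_insert_le _ _).trans (by omega)

end

theorem claim_d2_le_three_and_d3_eq_one_general
    {V : Type*} [Fintype V] (k : ℕ) (F : SimpleGraph V)
    (hfc : ∀ K : F.ConnectedComponent, FactorCritical (F.induce K.supp))
    (hsum : ∑ᶠ K : F.ConnectedComponent, (K.supp.ncard - 1) / 2 = k - 1)
    (he : (2 * k - 3).choose 2 + 2 ≤ F.edgeSet.ncard) :
    {K : F.ConnectedComponent | 3 < K.supp.ncard}.Subsingleton ∧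
    {K : F.ConnectedComponent | 1 < K.supp.ncard}.ncard ≤ 2 := by
  classical
  have hodd (K : F.ConnectedComponent) : Odd K.supp.ncard := by
    have : Nonempty K.supp := K.nonempty_supp.to_subtype
    rw [← Nat.card_coe_set_eq]
    exact (hfc K).odd_card
  obtain ⟨K₀, hK₀⟩ := exists_sum_erase_le_one_of_le_sum_choose_two hodd
    (by rwa [finsum_eq_sum_of_fintype] at hsum) (he.trans F.ncard_edgeSet_le_sum_choose_two)
  refine ⟨(subsingleton_setOf_two_le_of_sum_erase_le_one hK₀).anti fun K hK => ?_,
    (Set.ncard_le_ncard fun K hK => ?_).trans (ncard_setOf_pos_le_two_of_sum_erase_le_one hK₀)⟩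
  all_goals obtain ⟨t, ht⟩ := hodd K; simp only [Set.mem_ofPred_eq] at hK ⊢; omega

/-- Claim 3.3: let `k ≥ 2`, `n ≥ 2k+1`, and let `F` be a graph on `n` vertices all of whose
connected components are factor-critical, with component orders `d₁ ≥ d₂ ≥ ⋯ ≥ d_q`
satisfying `Σᵢ (dᵢ - 1)/2 = k - 1`. If `e(F) ≥ C(2k-3,2) + 2`, then `d₂ ≤ 3` and `d₃ = 1`,
i.e. at most one component has more than `3` vertices and at most two components have more
than one vertex. -/
theorem claim_d2_le_three_and_d3_eq_one
    {V : Type*} [Fintype V] (k n : ℕ) (hk : 2 ≤ k) (hn : 2 * k + 1 ≤ n)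
    (hV : Fintype.card V = n) (F : SimpleGraph V)
    (hfc : ∀ K : F.ConnectedComponent, FactorCritical (F.induce K.supp))
    (hsum : ∑ᶠ K : F.ConnectedComponent, (K.supp.ncard - 1) / 2 = k - 1)
    (he : (2 * k - 3).choose 2 + 2 ≤ F.edgeSet.ncard) :
    {K : F.ConnectedComponent | 3 < K.supp.ncard}.Subsingleton ∧
    {K : F.ConnectedComponent | 1 < K.supp.ncard}.ncard ≤ 2 :=
  claim_d2_le_three_and_d3_eq_one_general k F hfc hsum he
end

section
/- Let k ≥ 3 be an integer. Let G be an edge-colored graph containing no rainbow matching of size k, and let H be a rainbow representative subgraph of G. Suppose W ⊆ V(G) with |W| = 2k−1 is such that every edge of H has both endpoints in W, and suppose there exist vertices w ∈ W and u ∈ V(G) ∖ W with uw ∈ E(G). Then some vertex of W has degree at most k−1 in H. -/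
/-!
Suppose every vertex of `W` has `H`-degree at least `k`, and let `f` be the edge of `H` with the
colour of `uw`. Deleting `w` and `f` from `H` leaves a graph `K` on the `2(k - 1)` vertices of
`W \ {w}` with minimum degree at least `k - 2`, and at least `k - 1` off the ends of `f`.
Take a maximum matching `M` of `K`. Since `M` has no augmenting path of length one or three, two
uncovered vertices have degree sum at most `2|M|`. So if `|M| < k - 1`, every uncovered vertex
is an end of `f`, and there are two of them, `p` and `q`. Exchanging the edge `ab` of `M` at a
neighbour `a` of `p` for `pa` gives another maximum matching which leaves `b ∉ f` uncovered, a
contradiction. Hence `K` has a perfect matching; its colours avoid that of `uw` because `H` is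
rainbow, so adding `uw` yields a rainbow matching of size `k`.
-/

/-- `G` (with edge-coloring `c`) contains a rainbow matching of size `k`:
`k` pairwise vertex-disjoint edges of `G` with pairwise distinct colors. -/
def HasRainbowMatching {V α : Type*} (G : SimpleGraph V) (c : Sym2 V → α) (k : ℕ) : Prop :=
  ∃ M : Finset (Sym2 V), M.card = k ∧ ↑M ⊆ G.edgeSet ∧
    (∀ e ∈ M, ∀ f ∈ M, e ≠ f → ∀ v : V, v ∈ e → v ∉ f) ∧
    Set.InjOn c ↑M

/-- `H` is a rainbow representative subgraph of the edge-colored graph `(G, c)`: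
`H` is a (spanning) subgraph of `G`, its edges have pairwise distinct colors, and every
edge of `G` has the same color as some edge of `H` (one edge chosen per color class). -/
def IsRainbowRepresentative {V α : Type*} (G H : SimpleGraph V) (c : Sym2 V → α) : Prop :=
  H ≤ G ∧ Set.InjOn c H.edgeSet ∧ ∀ e ∈ G.edgeSet, ∃ f ∈ H.edgeSet, c e = c f

open Finset SimpleGraph

section Matching

variable {V : Type*}

def IsEdgeMatching (K : SimpleGraph V) (M : Finset (Sym2 V)) : Prop :=
  (M : Set (Sym2 V)) ⊆ K.edgeSet ∧ (M : Set (Sym2 V)).Pairwise fun e f => ∀ v ∈ e, v ∉ f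

def IsMaxEdgeMatching (K : SimpleGraph V) (M : Finset (Sym2 V)) : Prop :=
  IsEdgeMatching K M ∧ ∀ N, IsEdgeMatching K N → #N ≤ #M

namespace IsEdgeMatching

variable {G K : SimpleGraph V} {M N : Finset (Sym2 V)} {p a v : V}

lemma mono (hM : IsEdgeMatching K M) (hKG : K ≤ G) : IsEdgeMatching G M :=
  ⟨hM.1.trans (edgeSet_mono hKG), hM.2⟩

lemma subset (hM : IsEdgeMatching K M) (hNM : N ⊆ M) : IsEdgeMatching K N :=
  ⟨(coe_subset.2 hNM).trans hM.1, hM.2.mono (coe_subset.2 hNM)⟩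

lemma notMem_of_mem_erase [DecidableEq V] {e e' : Sym2 V} (hM : IsEdgeMatching K M)
    (he : e ∈ M) (hv : v ∈ e) (he' : e' ∈ M.erase e) : v ∉ e' :=
  hM.2 he (mem_of_mem_erase he') (ne_of_mem_erase he').symm v hv

lemma notMem_insert_erase_right [DecidableEq V] {b : V} (hM : IsEdgeMatching K M)
    (hab : s(a, b) ∈ M) (hp : ∀ e ∈ M, p ∉ e) : ∀ e ∈ insert s(p, a) (M.erase s(a, b)), b ∉ e := by
  have hbp : b ≠ p := by
    rintro rfl
    exact hp _ hab (Sym2.mem_mk_right a b)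
  have hba : b ≠ a := (K.ne_of_adj (K.mem_edgeSet.1 (hM.1 hab))).symm
  intro e he
  rcases mem_insert.1 he with rfl | he
  · simp [hbp, hba]
  · exact hM.notMem_of_mem_erase hab (Sym2.mem_mk_right a b) he

lemma insert [DecidableEq V] (hM : IsEdgeMatching K M) (hpa : K.Adj p a)
    (hp : ∀ e ∈ M, p ∉ e) (ha : ∀ e ∈ M, a ∉ e) : IsEdgeMatching K (insert s(p, a) M) := by
  have hnew : ∀ e ∈ M, ∀ v ∈ s(p, a), v ∉ e := by
    intro e he v hv
    rcases Sym2.mem_iff.1 hv with rfl | rfl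
    exacts [hp e he, ha e he]
  refine ⟨?_, ?_⟩
  · rw [coe_insert, Set.insert_subset_iff]
    exact ⟨hpa, hM.1⟩
  · rw [coe_insert, Set.pairwise_insert]
    exact ⟨hM.2, fun e he _ => ⟨hnew e he, fun v hv hv' => hnew e he v hv' hv⟩⟩

end IsEdgeMatching

lemma exists_isMaxEdgeMatching [Fintype V] (K : SimpleGraph V) :
    ∃ M, IsMaxEdgeMatching K M := by
  classical
  obtain ⟨M, hM, hmax⟩ := exists_max_image ({N | IsEdgeMatching K N} : Finset _) card
    ⟨∅, mem_filter.2 ⟨mem_univ _, by simp [IsEdgeMatching]⟩⟩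
  exact ⟨M, (mem_filter.1 hM).2, fun N hN => hmax N (mem_filter.2 ⟨mem_univ _, hN⟩)⟩

lemma notMem_insert_erase_of_forall_notMem [DecidableEq V] {M : Finset (Sym2 V)}
    {p a b v : V} (hab : s(a, b) ∈ M)
    (hv : ∀ e ∈ M, v ∉ e) (hvp : v ≠ p) : ∀ e ∈ insert s(p, a) (M.erase s(a, b)), v ∉ e := by
  have hva : v ≠ a := by
    rintro rfl
    exact hv _ hab (Sym2.mem_mk_left v b)
  intro e he
  rcases mem_insert.1 he with rfl | he
  · simp [hvp, hva]
  · exact hv e (mem_of_mem_erase he)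

namespace IsMaxEdgeMatching

variable [DecidableEq V] {K : SimpleGraph V} {M : Finset (Sym2 V)} {p a b v x y : V}

lemma exists_mem_of_adj (hM : IsMaxEdgeMatching K M) (hx : ∀ e ∈ M, x ∉ e) (hxv : K.Adj x v) :
    ∃ e ∈ M, v ∈ e := by
  by_contra! hv
  have hcard := hM.2 _ (hM.1.insert hxv hx hv)
  rw [card_insert_of_notMem fun h => hx _ h (Sym2.mem_mk_left x v)] at hcard
  omega

lemma swap (hM : IsMaxEdgeMatching K M) (hab : s(a, b) ∈ M) (hpa : K.Adj p a)
    (hp : ∀ e ∈ M, p ∉ e) : IsMaxEdgeMatching K (insert s(p, a) (M.erase s(a, b))) := by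
  have hp' : ∀ e ∈ M.erase s(a, b), p ∉ e := fun e he => hp e (mem_of_mem_erase he)
  have ha' : ∀ e ∈ M.erase s(a, b), a ∉ e := fun e he =>
    hM.1.notMem_of_mem_erase hab (Sym2.mem_mk_left a b) he
  refine ⟨(hM.1.subset (erase_subset _ _)).insert hpa hp' ha', fun N hN => ?_⟩
  rw [card_insert_of_notMem fun h => hp' _ h (Sym2.mem_mk_left p a), card_erase_add_one hab]
  exact hM.2 N hN

lemma not_adj_of_mem (hM : IsMaxEdgeMatching K M) (hx : ∀ e ∈ M, x ∉ e)
    (hy : ∀ e ∈ M, y ∉ e) (hxy : x ≠ y) (hab : s(a, b) ∈ M) (hxa : K.Adj x a) : ¬ K.Adj y b := by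
  intro hyb
  obtain ⟨e, he, hbe⟩ := (hM.swap hab hxa hx).exists_mem_of_adj
    (notMem_insert_erase_of_forall_notMem hab hy hxy.symm) hyb
  exact hM.1.notMem_insert_erase_right hab hx e he hbe

end IsMaxEdgeMatching

section Counting

variable [DecidableEq V] {M : Finset (Sym2 V)}

lemma card_le_sum_card_filter_mem {C : Finset V} (hC : ∀ v ∈ C, ∃ e ∈ M, v ∈ e) :
    #C ≤ ∑ e ∈ M, #{v ∈ C | v ∈ e} := by
  refine (card_le_card fun v hv => ?_).trans card_biUnion_le
  obtain ⟨e, he, hve⟩ := hC v hv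
  exact mem_biUnion.2 ⟨e, he, mem_filter.2 ⟨hv, hve⟩⟩

lemma card_le_two_mul_card {C : Finset V} (hC : ∀ v ∈ C, ∃ e ∈ M, v ∈ e) : #C ≤ 2 * #M := by
  refine (card_le_sum_card_filter_mem hC).trans ?_
  rw [mul_comm, ← smul_eq_mul, ← sum_const]
  refine sum_le_sum fun e _ => ?_
  calc #{v ∈ C | v ∈ e} ≤ #e.toFinset := card_le_card fun v hv => by simp_all
    _ ≤ 2 := by rw [Sym2.card_toFinset]; split_ifs <;> simp

variable {K : SimpleGraph V} [Fintype V] [DecidableRel K.Adj]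

lemma card_filter_neighborFinset_mem_pair {x a b : V} (hab : a ≠ b) :
    #{v ∈ K.neighborFinset x | v ∈ s(a, b)} =
      (if K.Adj x a then 1 else 0) + (if K.Adj x b then 1 else 0) := by
  have : {v ∈ K.neighborFinset x | v ∈ s(a, b)} = {v ∈ ({a, b} : Finset V) | K.Adj x v} := by
    ext v; simp [and_comm]
  rw [this, card_filter, sum_pair hab]

lemma IsMaxEdgeMatching.degree_add_degree_le (hM : IsMaxEdgeMatching K M) {x y : V}
    (hx : ∀ e ∈ M, x ∉ e) (hy : ∀ e ∈ M, y ∉ e) (hxy : x ≠ y) :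
    K.degree x + K.degree y ≤ 2 * #M := by
  have hcov {z : V} (hz : ∀ e ∈ M, z ∉ e) : ∀ v ∈ K.neighborFinset z, ∃ e ∈ M, v ∈ e :=
    fun v hv => hM.exists_mem_of_adj hz ((K.mem_neighborFinset z v).1 hv)
  calc K.degree x + K.degree y
      ≤ ∑ e ∈ M, (#{v ∈ K.neighborFinset x | v ∈ e} + #{v ∈ K.neighborFinset y | v ∈ e}) := by
        rw [sum_add_distrib]
        exact add_le_add (card_le_sum_card_filter_mem (hcov hx))
          (card_le_sum_card_filter_mem (hcov hy))
    _ ≤ ∑ _e ∈ M, 2 := sum_le_sum fun e he => ?_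
    _ = 2 * #M := by rw [sum_const, smul_eq_mul, mul_comm]
  induction e using Sym2.ind with
  | _ a b =>
    have hab : a ≠ b := K.ne_of_adj (K.mem_edgeSet.1 (hM.1.1 he))
    have h₁ := hM.not_adj_of_mem hx hy hxy he
    have h₂ := hM.not_adj_of_mem hx hy hxy (Sym2.eq_swap ▸ he)
    rw [card_filter_neighborFinset_mem_pair hab, card_filter_neighborFinset_mem_pair hab]
    split_ifs <;> simp_all

end Counting

theorem exists_isEdgeMatching_card_of_degree [DecidableEq V] [Fintype V] {K : SimpleGraph V}
    [DecidableRel K.Adj] {m : ℕ} (hm : 2 ≤ m) {S : Finset V} (hS : #S = 2 * m)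
    (hKS : K.support ⊆ S) {f : Sym2 V} (hdeg : ∀ v ∈ S, m - 1 ≤ K.degree v)
    (hdeg_f : ∀ v ∈ S, v ∉ f → m ≤ K.degree v) : ∃ M, #M = m ∧ IsEdgeMatching K M := by
  obtain ⟨M, hM⟩ := exists_isMaxEdgeMatching K
  suffices hmM : m ≤ #M by
    obtain ⟨N, hNM, hN⟩ := exists_subset_card_eq hmM
    exact ⟨N, hN, hM.1.subset hNM⟩
  by_contra! hMm
  have mem_f : ∀ M', IsMaxEdgeMatching K M' → ∀ x ∈ S, ∀ y ∈ S, x ≠ y →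
      (∀ e ∈ M', x ∉ e) → (∀ e ∈ M', y ∉ e) → x ∈ f := by
    intro M' hM' x hx y hy hxy hx' hy'
    by_contra hxf
    have := hM'.degree_add_degree_le hx' hy' hxy
    have := hM.2 M' hM'.1
    have := hdeg_f x hx hxf
    have := hdeg y hy
    omega
  have huncov : 1 < #{v ∈ S | ∀ e ∈ M, v ∉ e} := by
    have hcov := card_le_two_mul_card (M := M) (C := {v ∈ S | ¬ ∀ e ∈ M, v ∉ e})
      fun v hv => by simpa using (mem_filter.1 hv).2
    have := card_filter_add_card_filter_not (s := S) fun v => ∀ e ∈ M, v ∉ e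
    omega
  obtain ⟨p, hp, q, hq, hpq⟩ := one_lt_card.1 huncov
  rw [mem_filter] at hp hq
  have hf : f = s(p, q) := (Sym2.mem_and_mem_iff hpq).1
    ⟨mem_f M hM p hp.1 q hq.1 hpq hp.2 hq.2, mem_f M hM q hq.1 p hp.1 hpq.symm hq.2 hp.2⟩
  obtain ⟨a, hpa⟩ := K.degree_pos_iff_exists_adj p |>.1 (by have := hdeg p hp.1; omega)
  obtain ⟨e, he, hae⟩ := hM.exists_mem_of_adj hp.2 hpa
  set b := Sym2.Mem.other' hae
  have hab : s(a, b) ∈ M := (Sym2.other_spec' hae).symm ▸ he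
  have hb_cov (v : V) (hv : ∀ e ∈ M, v ∉ e) : b ≠ v := by
    rintro rfl
    exact hv _ hab (Sym2.mem_mk_right a b)
  have hbS : b ∈ S := hKS ⟨a, (K.mem_edgeSet.1 (hM.1.1 hab)).symm⟩
  have hbf := mem_f _ (hM.swap hab hpa hp.2) b hbS q hq.1 (hb_cov q hq.2)
    (hM.1.notMem_insert_erase_right hab hp.2)
    (notMem_insert_erase_of_forall_notMem hab hq.2 hpq.symm)
  rw [hf, Sym2.mem_iff] at hbf
  exact hbf.elim (hb_cov p hp.2) (hb_cov q hq.2)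

section Degree

variable [DecidableEq V] {G K : SimpleGraph V} {v w : V}
  [Fintype (G.neighborSet v)] [Fintype (K.neighborSet v)]

lemma degree_sub_card_le_degree (B : Finset V) (h : ∀ b, G.Adj v b → b ∉ B → K.Adj v b) :
    G.degree v - #B ≤ K.degree v :=
  calc G.degree v - #B ≤ #(G.neighborFinset v \ B) := le_card_sdiff _ _
    _ ≤ K.degree v := card_le_card fun b hb => by
      rw [mem_sdiff, mem_neighborFinset] at hb
      exact (K.mem_neighborFinset v b).2 (h b hb.1 hb.2)

lemma degree_sub_one_le_degree {f : Sym2 V} (hvf : v ∉ f)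
    (h : ∀ b, G.Adj v b → b ≠ w → s(v, b) ≠ f → K.Adj v b) : G.degree v - 1 ≤ K.degree v := by
  refine (card_singleton w).symm ▸ degree_sub_card_le_degree {w} fun b hvb hbw => ?_
  refine h b hvb (by simpa using hbw) ?_
  rintro rfl
  exact hvf (Sym2.mem_mk_left v b)

lemma degree_sub_two_le_degree {f : Sym2 V}
    (h : ∀ b, G.Adj v b → b ≠ w → s(v, b) ≠ f → K.Adj v b) : G.degree v - 2 ≤ K.degree v := by
  by_cases hvf : v ∈ f
  · refine le_trans (by gcongr; exact card_le_two) <|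
      degree_sub_card_le_degree {w, Sym2.Mem.other' hvf} fun b hvb hb => ?_
    rw [mem_insert, mem_singleton, not_or] at hb
    refine h b hvb hb.1 fun hbf => hb.2 ?_
    exact Sym2.congr_right.1 (hbf.trans (Sym2.other_spec' hvf).symm)
  · exact (Nat.sub_le_sub_left (by norm_num) _).trans (degree_sub_one_le_degree hvf h)

end Degree

lemma hasRainbowMatching_insert {α : Type*} [DecidableEq V] {G H : SimpleGraph V}
    {c : Sym2 V → α} {M : Finset (Sym2 V)} {f : Sym2 V} {u w : V} (hHG : H ≤ G)
    (hinj : Set.InjOn c H.edgeSet) (hM : IsEdgeMatching H M) (hf : f ∈ H.edgeSet) (hfM : f ∉ M)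
    (huw : G.Adj u w) (hcf : c s(u, w) = c f) (hu : ∀ e ∈ M, u ∉ e) (hw : ∀ e ∈ M, w ∉ e) :
    HasRainbowMatching G c (#M + 1) := by
  have huwM : s(u, w) ∉ M := fun h => hu _ h (Sym2.mem_mk_left u w)
  obtain ⟨hMG, hdisj⟩ := (hM.mono hHG).insert huw hu hw
  refine ⟨_, card_insert_of_notMem huwM, hMG, fun e he e' he' hne => hdisj he he' hne, ?_⟩
  rw [coe_insert, Set.injOn_insert (mod_cast huwM)]
  refine ⟨hinj.mono hM.1, ?_⟩
  rintro ⟨e, he, hce⟩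
  exact hfM (hinj hf (hM.1 he) (hcf ▸ hce).symm ▸ he)

end Matching

/-- Claim 3.7: let `k ≥ 3`, let `G` be an edge-colored graph with no rainbow matching of
size `k`, and let `H` be a rainbow representative subgraph of `G`. Suppose `W` is a set of
`2k-1` vertices containing both endpoints of every edge of `H`, and suppose some `w ∈ W` is
joined in `G` to some `u ∉ W`. Then some vertex of `W` has degree at most `k-1` in `H`. -/
theorem claim_small_degree_vertex
    {V α : Type*} [Fintype V] (k : ℕ) (hk : 3 ≤ k)
    (G H : SimpleGraph V) (c : Sym2 V → α)
    (hno : ¬ HasRainbowMatching G c k)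
    (hrep : IsRainbowRepresentative G H c)
    (W : Set V) (hW : W.ncard = 2 * k - 1)
    (hHW : ∀ e ∈ H.edgeSet, ∀ v ∈ e, v ∈ W)
    (w : V) (hw : w ∈ W) (u : V) (hu : u ∉ W) (hadj : G.Adj u w) :
    ∃ x ∈ W, (H.neighborSet x).ncard ≤ k - 1 := by
  classical
  by_contra! hdeg
  simp only [← coe_neighborFinset, Set.ncard_coe_finset, card_neighborFinset_eq_degree] at hdeg
  obtain ⟨hHG, hinj, hcol⟩ := hrep
  obtain ⟨f, hfH, hcf⟩ := hcol _ (G.mem_edgeSet.2 hadj)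
  set K := (H.deleteIncidenceSet w).deleteEdges {f}
  set S := W.toFinset.erase w
  have hS : #S = 2 * (k - 1) := by
    rw [card_erase_of_mem (by simpa), ← Set.ncard_eq_toFinset_card']
    omega
  have hKS : K.support ⊆ S := fun v ⟨b, hvb⟩ => by
    simp only [K, deleteEdges_adj, deleteIncidenceSet_adj] at hvb
    simpa [S, hvb.1.2.1] using hHW _ hvb.1.1 v (Sym2.mem_mk_left v b)
  have hK (v : V) (hv : v ∈ S) (b : V) (hvb : H.Adj v b) (hbw : b ≠ w) (hbf : s(v, b) ≠ f) :
      K.Adj v b := by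
    simp_all [K, S, deleteIncidenceSet_adj]
  have hdegS (v : V) (hv : v ∈ S) : k ≤ H.degree v := by
    have := hdeg v (by simp_all [S])
    omega
  obtain ⟨M, hMcard, hM⟩ := exists_isEdgeMatching_card_of_degree (K := K) (by omega) hS hKS
    (fun v hv => by have := degree_sub_two_le_degree (hK v hv); have := hdegS v hv; omega)
    (fun v hv hvf => by
      have := degree_sub_one_le_degree hvf (hK v hv); have := hdegS v hv; omega)
  have hMK (e : Sym2 V) (he : e ∈ M) : e ∈ H.edgeSet ∧ w ∉ e ∧ e ≠ f := by
    have := hM.1 he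
    simp_all [K, edgeSet_deleteEdges, edgeSet_deleteIncidenceSet, incidenceSet]
  have hMH := hM.mono (le_trans (deleteEdges_le _) (deleteIncidenceSet_le H w))
  have := hasRainbowMatching_insert hHG hinj hMH hfH (fun h => (hMK f h).2.2 rfl) hadj hcf
    (fun e he hue => hu (hHW e (hMK e he).1 u hue)) (fun e he => (hMK e he).2.1)
  exact hno (by rwa [hMcard, Nat.sub_add_cancel (by omega)] at this)
end
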